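/- For every natural number l, the equation x² + y₁⁴ + ⋯ + y₆⁴ = 16^l · 47 has no solution in nonnegative integers. Consequently there exist infinitely many natural numbers not representable as the sum of one square and six fourth powers of nonnegative integers. -/
import Mathlib

lemma pow4_mod16 (y : ℕ) : (y % 2 = 0 ∧ y ^ 4 % 16 = 0) ∨ (y % 2 = 1 ∧ y ^ 4 % 16 = 1) := by
  have h : y ^ 4 % 16 = (y % 16) ^ 4 % 16 := Nat.pow_mod y 4 16
  have h2 : y % 2 = (y % 16) % 2 := (Nat.mod_mod_of_dvd y (by norm_num)).symm
  have hb : y % 16 < 16 := Nat.mod_lt _ (by norm_num)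
  set r := y % 16 with hr
  interval_cases r <;> norm_num at h h2 ⊢ <;> omega

lemma sq_mod16 (x : ℕ) : (x % 4 = 0 ∧ x ^ 2 % 16 = 0) ∨ x ^ 2 % 16 = 1 ∨ x ^ 2 % 16 = 4 ∨ x ^ 2 % 16 = 9 := by
  have h : x ^ 2 % 16 = (x % 16) ^ 2 % 16 := Nat.pow_mod x 2 16
  have h2 : x % 4 = (x % 16) % 4 := (Nat.mod_mod_of_dvd x (by norm_num)).symm
  have hb : x % 16 < 16 := Nat.mod_lt _ (by norm_num)
  set r := x % 16 with hr
  interval_cases r <;> norm_num at h h2 ⊢ <;> omega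

set_option synthInstance.maxSize 2000 in
set_option synthInstance.maxHeartbeats 1000000 in
lemma base_check : ∀ x < 7, ∀ a < 3, ∀ b < 3, ∀ c < 3, ∀ d < 3, ∀ e < 3, ∀ f < 3,
    x ^ 2 + a ^ 4 + b ^ 4 + c ^ 4 + d ^ 4 + e ^ 4 + f ^ 4 ≠ 47 := by decide

set_option maxHeartbeats 1000000 in
lemma succ_omega (X Y1 Y2 Y3 Y4 Y5 Y6 M P Q1 Q2 Q3 Q4 Q5 Q6 : ℕ)
    (h : X + Y1 + Y2 + Y3 + Y4 + Y5 + Y6 = 16 * M)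
    (hx : (P = 0 ∧ X % 16 = 0) ∨ X % 16 = 1 ∨ X % 16 = 4 ∨ X % 16 = 9)
    (h1 : (Q1 = 0 ∧ Y1 % 16 = 0) ∨ (Q1 = 1 ∧ Y1 % 16 = 1))
    (h2 : (Q2 = 0 ∧ Y2 % 16 = 0) ∨ (Q2 = 1 ∧ Y2 % 16 = 1))
    (h3 : (Q3 = 0 ∧ Y3 % 16 = 0) ∨ (Q3 = 1 ∧ Y3 % 16 = 1))
    (h4 : (Q4 = 0 ∧ Y4 % 16 = 0) ∨ (Q4 = 1 ∧ Y4 % 16 = 1))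
    (h5 : (Q5 = 0 ∧ Y5 % 16 = 0) ∨ (Q5 = 1 ∧ Y5 % 16 = 1))
    (h6 : (Q6 = 0 ∧ Y6 % 16 = 0) ∨ (Q6 = 1 ∧ Y6 % 16 = 1)) :
    P = 0 ∧ Q1 = 0 ∧ Q2 = 0 ∧ Q3 = 0 ∧ Q4 = 0 ∧ Q5 = 0 ∧ Q6 = 0 := by
  omega

lemma no_rep_aux : ∀ l : ℕ, ¬ ∃ x y₁ y₂ y₃ y₄ y₅ y₆ : ℕ,
    x ^ 2 + y₁ ^ 4 + y₂ ^ 4 + y₃ ^ 4 + y₄ ^ 4 + y₅ ^ 4 + y₆ ^ 4 = 16 ^ l * 47 := by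
  intro l
  induction l with
  | zero =>
    rintro ⟨x, y₁, y₂, y₃, y₄, y₅, y₆, h⟩
    simp only [pow_zero, one_mul] at h
    have hx : x < 7 := by
      by_contra hc
      have : 7 ^ 2 ≤ x ^ 2 := Nat.pow_le_pow_left (by omega) 2
      omega
    have hy : ∀ y : ℕ, y ^ 4 ≤ 47 → y < 3 := by
      intro y hy
      by_contra hc
      have : 3 ^ 4 ≤ y ^ 4 := Nat.pow_le_pow_left (by omega) 4
      omega
    exact base_check x hx y₁ (hy y₁ (by omega)) y₂ (hy y₂ (by omega)) y₃ (hy y₃ (by omega))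
      y₄ (hy y₄ (by omega)) y₅ (hy y₅ (by omega)) y₆ (hy y₆ (by omega)) h
  | succ l ih =>
    rintro ⟨x, y₁, y₂, y₃, y₄, y₅, y₆, h⟩
    rw [show (16:ℕ) ^ (l + 1) * 47 = 16 * (16 ^ l * 47) by ring] at h
    have hx := sq_mod16 x
    have h1 := pow4_mod16 y₁
    have h2 := pow4_mod16 y₂
    have h3 := pow4_mod16 y₃
    have h4 := pow4_mod16 y₄
    have h5 := pow4_mod16 y₅
    have h6 := pow4_mod16 y₆
    have hx4 := succ_omega (x ^ 2) (y₁ ^ 4) (y₂ ^ 4) (y₃ ^ 4) (y₄ ^ 4) (y₅ ^ 4) (y₆ ^ 4)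
      (16 ^ l * 47) (x % 4) (y₁ % 2) (y₂ % 2) (y₃ % 2) (y₄ % 2) (y₅ % 2) (y₆ % 2)
      h hx h1 h2 h3 h4 h5 h6
    obtain ⟨ha, hb1, hb2, hb3, hb4, hb5, hb6⟩ := hx4
    apply ih
    refine ⟨x / 4, y₁ / 2, y₂ / 2, y₃ / 2, y₄ / 2, y₅ / 2, y₆ / 2, ?_⟩
    have ex : x = 4 * (x / 4) := by omega
    have e1 : y₁ = 2 * (y₁ / 2) := by omega
    have e2 : y₂ = 2 * (y₂ / 2) := by omega
    have e3 : y₃ = 2 * (y₃ / 2) := by omega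
    have e4 : y₄ = 2 * (y₄ / 2) := by omega
    have e5 : y₅ = 2 * (y₅ / 2) := by omega
    have e6 : y₆ = 2 * (y₆ / 2) := by omega
    rw [ex, e1, e2, e3, e4, e5, e6] at h
    have h' : 16 * ((x / 4) ^ 2 + (y₁ / 2) ^ 4 + (y₂ / 2) ^ 4 + (y₃ / 2) ^ 4 + (y₄ / 2) ^ 4
        + (y₅ / 2) ^ 4 + (y₆ / 2) ^ 4) = 16 * (16 ^ l * 47) := by
      rw [← h]; ring
    exact Nat.eq_of_mul_eq_mul_left (by norm_num) h'

theorem no_rep_sixteen_pow_mul_47 :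
    (∀ l : ℕ, ¬ ∃ x y₁ y₂ y₃ y₄ y₅ y₆ : ℕ,
      x ^ 2 + y₁ ^ 4 + y₂ ^ 4 + y₃ ^ 4 + y₄ ^ 4 + y₅ ^ 4 + y₆ ^ 4 = 16 ^ l * 47) ∧
    {n : ℕ | ¬ ∃ x y₁ y₂ y₃ y₄ y₅ y₆ : ℕ,
      x ^ 2 + y₁ ^ 4 + y₂ ^ 4 + y₃ ^ 4 + y₄ ^ 4 + y₅ ^ 4 + y₆ ^ 4 = n}.Infinite := by
  refine ⟨no_rep_aux, ?_⟩
  apply Set.infinite_of_injective_forall_mem (f := fun l : ℕ => 16 ^ l * 47)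
  case hi =>
    intro a b hab
    simp only at hab
    have h16 : (16 : ℕ) ^ a = 16 ^ b := by omega
    exact Nat.pow_right_injective (by norm_num) h16
  case hf => exact fun l => no_rep_aux l
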